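/- Let Θ ⊆ ℝ^n be a nonempty closed convex set, P : Θ → 𝒫(ℝ^m) a map assigning to each decision a Borel probability measure, ℓ : ℝ^m × ℝ^n → ℝ a loss, r : ℝ^n → ℝ a regularizer, and define J_η(θ) := ∫ ℓ(z,θ) dP(η)(z) + r(θ). Assume: (i) for every z, θ ↦ ℓ(z,θ) is γ-strongly convex on Θ; (ii) r is ρ-strongly convex on Θ and γ + ρ > 0; (iii) for every θ ∈ Θ, z ↦ ℓ(z,θ) is L_z-Lipschitz and P(η)-integrable for every η ∈ Θ; (iv) P is ε-sensitive in Kantorovich dual form: for every L ≥ 0, every L-Lipschitz function g : ℝ^m → ℝ, and all η, η' ∈ Θ, |∫ g dP(η) − ∫ g dP(η')| ≤ εL‖η − η'‖. Suppose θ_RPS ∈ Θ minimizes θ ↦ J_{θ_RPS}(θ) over Θ, and θ_RPO ∈ Θ minimizes θ ↦ J_θ(θ) over Θ. Then ‖θ_RPS − θ_RPO‖ ≤ 2εL_z/(γ+ρ). -/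

import Mathlib

/-!
Let `F := J_{θ_RPS}`. It is `(γ + ρ)`-strongly convex with minimizer `θ_RPS`, so it grows
quadratically away from it: `(γ + ρ)/2 ‖θ_RPS - θ_RPO‖² ≤ F θ_RPO - F θ_RPS`. Optimality of
`θ_RPO` compared with `θ_RPS` bounds the right-hand side by the change of `∫ ℓ(·, θ_RPO)` when the
distribution moves from `P θ_RPO` to `P θ_RPS`, which `ε`-sensitivity bounds by
`ε L_z ‖θ_RPS - θ_RPO‖`. Dividing by the distance gives the claim.
-/

open MeasureTheory Filter Topology

section StrongConvexity

variable {E : Type*} [NormedAddCommGroup E] [NormedSpace ℝ E] {s : Set E}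

lemma UniformConvexOn.integral {α : Type*} [MeasurableSpace α] {μ : Measure α}
    [IsProbabilityMeasure μ] {φ : ℝ → ℝ} {f : α → E → ℝ}
    (hf : ∀ a, UniformConvexOn s φ (f a)) (hint : ∀ x ∈ s, Integrable (f · x) μ) :
    UniformConvexOn s φ fun x ↦ ∫ a, f a x ∂μ := by
  obtain ⟨a₀⟩ := nonempty_of_isProbabilityMeasure μ
  refine ⟨(hf a₀).1, fun x hx y hy a b ha hb hab ↦ ?_⟩
  have hxy : Integrable (fun z ↦ a * f z x + b * f z y) μ :=
    ((hint x hx).const_mul a).add ((hint y hy).const_mul b)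
  calc ∫ z, f z (a • x + b • y) ∂μ
      ≤ ∫ z, (a * f z x + b * f z y - a * b * φ ‖x - y‖) ∂μ :=
        integral_mono (hint _ ((hf a₀).1 hx hy ha hb hab)) (hxy.sub (integrable_const _))
          fun z ↦ (hf z).2 hx hy ha hb hab
    _ = a • ∫ z, f z x ∂μ + b • ∫ z, f z y ∂μ - a * b * φ ‖x - y‖ := by
        rw [integral_sub hxy (integrable_const _), integral_add ((hint x hx).const_mul a)
          ((hint y hy).const_mul b), integral_const_mul, integral_const_mul, integral_const]
        simp

lemma StrongConvexOn.add {m n : ℝ} {f g : E → ℝ} (hf : StrongConvexOn s m f)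
    (hg : StrongConvexOn s n g) : StrongConvexOn s (m + n) (f + g) := by
  have := UniformConvexOn.add hf hg
  unfold StrongConvexOn
  convert this using 1
  ext r
  simp only [Pi.add_apply]
  ring

lemma StrongConvexOn.half_mul_sq_norm_sub_le_of_isMinOn {m : ℝ} {f : E → ℝ} {x y : E}
    (hf : StrongConvexOn s m f) (hmin : IsMinOn f s x) (hx : x ∈ s) (hy : y ∈ s) :
    m / 2 * ‖x - y‖ ^ 2 ≤ f y - f x := by
  have hsegment : ∀ b ∈ Set.Ioo (0 : ℝ) 1, (1 - b) * (m / 2 * ‖x - y‖ ^ 2) ≤ f y - f x := by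
    rintro b ⟨hb₀, hb₁⟩
    have hmem := hf.1 hx hy (sub_nonneg.2 hb₁.le) hb₀.le (sub_add_cancel 1 b)
    have hconv := hf.2 hx hy (sub_nonneg.2 hb₁.le) hb₀.le (sub_add_cancel 1 b)
    have hle := isMinOn_iff.1 hmin _ hmem
    simp only [smul_eq_mul] at hconv
    refine le_of_mul_le_mul_left ?_ hb₀
    linarith
  have hlim : Tendsto (fun b : ℝ ↦ (1 - b) * (m / 2 * ‖x - y‖ ^ 2)) (𝓝[>] 0)
      (𝓝 (m / 2 * ‖x - y‖ ^ 2)) := by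
    have : Continuous fun b : ℝ ↦ (1 - b) * (m / 2 * ‖x - y‖ ^ 2) := by fun_prop
    exact (this.tendsto' 0 _ (by simp)).mono_left nhdsWithin_le_nhds
  exact le_of_tendsto hlim (eventually_of_mem (Ioo_mem_nhdsGT zero_lt_one) hsegment)

end StrongConvexity

lemma le_two_mul_div_of_half_mul_sq_le {c K d : ℝ} (hc : 0 < c) (hK : 0 ≤ K) (hd : 0 ≤ d)
    (h : c / 2 * d ^ 2 ≤ K * d) : d ≤ 2 * K / c := by
  rw [le_div_iff₀ hc]
  rcases hd.eq_or_lt with rfl | hd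
  · simpa using hK
  · nlinarith

theorem RPS_RPO_distance_bound_general {n m : ℕ} (γ ρ ε Lz : ℝ)
    (hγρ : 0 < γ + ρ) (hε : 0 ≤ ε) (hLz : 0 ≤ Lz)
    (Θ : Set (EuclideanSpace ℝ (Fin n)))
    (P : EuclideanSpace ℝ (Fin n) → Measure (EuclideanSpace ℝ (Fin m)))
    (hP : ∀ η, IsProbabilityMeasure (P η))
    (ℓ : EuclideanSpace ℝ (Fin m) → EuclideanSpace ℝ (Fin n) → ℝ)
    (r : EuclideanSpace ℝ (Fin n) → ℝ)
    -- (i) γ-strong convexity of the loss in θ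
    (hℓsc : ∀ z, ConvexOn ℝ Θ (fun θ => ℓ z θ - γ / 2 * ‖θ‖ ^ 2))
    -- (ii) ρ-strong convexity of the regularizer
    (hrsc : ConvexOn ℝ Θ (fun θ => r θ - ρ / 2 * ‖θ‖ ^ 2))
    -- (iii) Lipschitz continuity in z and integrability
    (hLip : ∀ θ ∈ Θ, ∀ z z' : EuclideanSpace ℝ (Fin m),
      |ℓ z θ - ℓ z' θ| ≤ Lz * ‖z - z'‖)
    (hint : ∀ θ ∈ Θ, ∀ η ∈ Θ, Integrable (fun z => ℓ z θ) (P η))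
    -- (iv) ε-sensitivity in Kantorovich dual form
    (hsens : ∀ L : ℝ, 0 ≤ L → ∀ g : EuclideanSpace ℝ (Fin m) → ℝ,
      (∀ z z', |g z - g z'| ≤ L * ‖z - z'‖) →
      ∀ η ∈ Θ, ∀ η' ∈ Θ,
        |(∫ z, g z ∂(P η)) - ∫ z, g z ∂(P η')| ≤ ε * L * ‖η - η'‖)
    -- θ_RPS minimizes J_{θ_RPS} over Θ; θ_RPO minimizes θ ↦ J_θ(θ) over Θ
    (θRPS θRPO : EuclideanSpace ℝ (Fin n))
    (hRPSmem : θRPS ∈ Θ) (hRPOmem : θRPO ∈ Θ)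
    (hRPS : ∀ θ ∈ Θ,
      (∫ z, ℓ z θRPS ∂(P θRPS)) + r θRPS ≤ (∫ z, ℓ z θ ∂(P θRPS)) + r θ)
    (hRPO : ∀ θ ∈ Θ,
      (∫ z, ℓ z θRPO ∂(P θRPO)) + r θRPO ≤ (∫ z, ℓ z θ ∂(P θ)) + r θ) :
    ‖θRPS - θRPO‖ ≤ 2 * ε * Lz / (γ + ρ) := by
  have hJ : StrongConvexOn Θ (γ + ρ) fun θ ↦ (∫ z, ℓ z θ ∂(P θRPS)) + r θ :=
    StrongConvexOn.add (f := fun θ ↦ ∫ z, ℓ z θ ∂(P θRPS))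
      (UniformConvexOn.integral (fun z ↦ strongConvexOn_iff_convex.2 (hℓsc z))
        fun θ hθ ↦ hint θ hθ θRPS hRPSmem)
      (strongConvexOn_iff_convex.2 hrsc)
  have hgrowth := hJ.half_mul_sq_norm_sub_le_of_isMinOn (isMinOn_iff.2 hRPS) hRPSmem hRPOmem
  have hshift := (le_abs_self _).trans
    (hsens Lz hLz (fun z ↦ ℓ z θRPO) (hLip θRPO hRPOmem) θRPS hRPSmem θRPO hRPOmem)
  have hRPO_RPS := hRPO θRPS hRPSmem
  rw [mul_assoc]
  exact le_two_mul_div_of_half_mul_sq_le hγρ (by positivity) (norm_nonneg (θRPS - θRPO))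
    (by linarith)

/-- Inequality (14) in the proof of Theorem 2 of the paper: the distance between
the robust performatively stable point `θ_RPS` (minimizer over `Θ` of
`θ ↦ J_{θ_RPS}(θ)`) and the robust performatively optimal point `θ_RPO`
(minimizer over `Θ` of `θ ↦ J_θ(θ)`) is at most `2εL_z/(γ+ρ)`, where
`J_η(θ) = ∫ ℓ(z,θ) dP(η)(z) + r(θ)`. Here `γ`-strong convexity of `f` on `Θ`
means convexity of `θ ↦ f θ - γ/2 * ‖θ‖²` on `Θ`, and the distribution map `P`
is `ε`-sensitive in the Kantorovich dual form. -/
theorem RPS_RPO_distance_bound {n m : ℕ} (γ ρ ε Lz : ℝ)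
    (hγρ : 0 < γ + ρ) (hε : 0 ≤ ε) (hLz : 0 ≤ Lz)
    (Θ : Set (EuclideanSpace ℝ (Fin n))) (hΘne : Θ.Nonempty)
    (hΘcl : IsClosed Θ) (hΘconv : Convex ℝ Θ)
    (P : EuclideanSpace ℝ (Fin n) → Measure (EuclideanSpace ℝ (Fin m)))
    (hP : ∀ η, IsProbabilityMeasure (P η))
    (ℓ : EuclideanSpace ℝ (Fin m) → EuclideanSpace ℝ (Fin n) → ℝ)
    (r : EuclideanSpace ℝ (Fin n) → ℝ)
    -- (i) γ-strong convexity of the loss in θ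
    (hℓsc : ∀ z, ConvexOn ℝ Θ (fun θ => ℓ z θ - γ / 2 * ‖θ‖ ^ 2))
    -- (ii) ρ-strong convexity of the regularizer
    (hrsc : ConvexOn ℝ Θ (fun θ => r θ - ρ / 2 * ‖θ‖ ^ 2))
    -- (iii) Lipschitz continuity in z and integrability
    (hLip : ∀ θ ∈ Θ, ∀ z z' : EuclideanSpace ℝ (Fin m),
      |ℓ z θ - ℓ z' θ| ≤ Lz * ‖z - z'‖)
    (hint : ∀ θ ∈ Θ, ∀ η ∈ Θ, Integrable (fun z => ℓ z θ) (P η))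
    -- (iv) ε-sensitivity in Kantorovich dual form
    (hsens : ∀ L : ℝ, 0 ≤ L → ∀ g : EuclideanSpace ℝ (Fin m) → ℝ,
      (∀ z z', |g z - g z'| ≤ L * ‖z - z'‖) →
      ∀ η ∈ Θ, ∀ η' ∈ Θ,
        |(∫ z, g z ∂(P η)) - ∫ z, g z ∂(P η')| ≤ ε * L * ‖η - η'‖)
    -- θ_RPS minimizes J_{θ_RPS} over Θ; θ_RPO minimizes θ ↦ J_θ(θ) over Θ
    (θRPS θRPO : EuclideanSpace ℝ (Fin n))
    (hRPSmem : θRPS ∈ Θ) (hRPOmem : θRPO ∈ Θ)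
    (hRPS : ∀ θ ∈ Θ,
      (∫ z, ℓ z θRPS ∂(P θRPS)) + r θRPS ≤ (∫ z, ℓ z θ ∂(P θRPS)) + r θ)
    (hRPO : ∀ θ ∈ Θ,
      (∫ z, ℓ z θRPO ∂(P θRPO)) + r θRPO ≤ (∫ z, ℓ z θ ∂(P θ)) + r θ) :
    ‖θRPS - θRPO‖ ≤ 2 * ε * Lz / (γ + ρ) :=
  RPS_RPO_distance_bound_general γ ρ ε Lz hγρ hε hLz Θ P hP ℓ r hℓsc hrsc hLip hint hsens θRPS θRPO
    hRPSmem hRPOmem hRPS hRPO
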